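/- Let s, t be coprime integers greater than 1. The set of (s,t)-minimal partitions is preserved by the action of W_s × W_t on partitions: if λ is (s,t)-minimal and w ∈ W_s × W_t, then wλ is (s,t)-minimal. Consequently, for u ∈ W_s and v ∈ W_t, the minimal size satisfies m_{uσ, vτ} = m_{σ,τ} − |σ| − |τ| + |uσ| + |vτ|. -/

import Mathlib

/-- A partition, given as a weakly decreasing finitely-supported sequence of
natural numbers (`parts 0` is the first part). -/
structure SeqPartition where
  parts : ℕ →₀ ℕ
  antitone : ∀ ⦃i j : ℕ⦄, i ≤ j → parts j ≤ parts i

namespace SeqPartition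

/-- The size `|λ|` of a partition. -/
def size (l : SeqPartition) : ℕ := l.parts.sum fun _ v => v

/-- The beta-set `β(λ) = { λ_r − r : r ≥ 1 }` (here 0-indexed). -/
def betaSet (l : SeqPartition) : Set ℤ :=
  Set.range fun r : ℕ => (l.parts r : ℤ) - (r + 1)

/-- `RemoveHook h l m` : `m` is obtained from `l` by removing a rim `h`-hook;
in beta-set terms, an element `b` of `β(l)` is replaced by `b − h ∉ β(l)`. -/
def RemoveHook (h : ℕ) (l m : SeqPartition) : Prop :=
  ∃ b : ℤ, b ∈ l.betaSet ∧ b - (h : ℤ) ∉ l.betaSet ∧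
    m.betaSet = insert (b - (h : ℤ)) (l.betaSet \ {b})

/-- `l` is an `s`-core: no rim `s`-hook can be removed. -/
def IsCore (s : ℕ) (l : SeqPartition) : Prop := ∀ m : SeqPartition, ¬ RemoveHook s l m

/-- `c` is the `s`-core of `l`: it is obtained from `l` by repeatedly removing
rim `s`-hooks, and is itself an `s`-core. -/
def HasCore (s : ℕ) (l c : SeqPartition) : Prop :=
  Relation.ReflTransGen (RemoveHook s) l c ∧ IsCore s c

/-- `IsConj l m` : `m` is the conjugate partition of `l`. -/
def IsConj (l m : SeqPartition) : Prop :=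
  ∀ r : ℕ, m.parts r = Set.ncard {c : ℕ | r + 1 ≤ l.parts c}

end SeqPartition

/-- The region `U_x = { x + as + bt : a, b > 0 }`. -/
def UpSet (s t : ℕ) (x : ℤ) : Set ℤ :=
  {n : ℤ | ∃ a b : ℕ, 0 < a ∧ 0 < b ∧ n = x + (a : ℤ) * s + (b : ℤ) * t}

/-- The region `L_x = { x − as − bt : a, b ≥ 0 }`. -/
def LowSet (s t : ℕ) (x : ℤ) : Set ℤ :=
  {n : ℤ | ∃ a b : ℕ, n = x - (a : ℤ) * s - (b : ℤ) * t}

/-- `x` is a pinch-point for `l` : `L_x ⊆ β(l)` and `β(l) ∩ U_x = ∅`. -/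
def PinchPoint (s t : ℕ) (x : ℤ) (l : SeqPartition) : Prop :=
  LowSet s t x ⊆ l.betaSet ∧ l.betaSet ∩ UpSet s t x = ∅

/-- The generator `w_i` of the affine symmetric group `W_s` in its level-`t`
action on `ℤ` : `n ↦ n + t` if `n ≡ (i−1)t − (s−1)(t−1)/2 (mod s)`,
`n ↦ n − t` if `n ≡ it − (s−1)(t−1)/2 (mod s)`, and `n ↦ n` otherwise. -/
def wgen (s t : ℕ) (i : ℤ) : ℤ → ℤ := fun n =>
  if (s : ℤ) ∣ (n + ((s : ℤ) - 1) * ((t : ℤ) - 1) / 2 - (i - 1) * t) then n + t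
  else if (s : ℤ) ∣ (n + ((s : ℤ) - 1) * ((t : ℤ) - 1) / 2 - i * t) then n - t
  else n

/-- The monoid of maps `ℤ → ℤ` generated by the `wgen s t i`.  Since each
generator is an involution, this is the image of the level-`t` action
of the affine symmetric group `W_s` on `ℤ`. -/
def WMon (s t : ℕ) : Submonoid (Function.End ℤ) :=
  Submonoid.closure {f | ∃ i : ℤ, f = wgen s t i}

/-- `l` is `(s,t)`-minimal: no partition of smaller size has the same
`s`-core and `t`-core. -/
def MinimalPart (s t : ℕ) (l : SeqPartition) : Prop :=
  ∀ (m σ τ : SeqPartition), SeqPartition.HasCore s l σ → SeqPartition.HasCore t l τ →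
    SeqPartition.HasCore s m σ → SeqPartition.HasCore t m τ → l.size ≤ m.size

/-!
A partition is encoded by its beta-set, and its `s`-core by the number of beads on each runner
of the `s`-abacus (counted in a large window `[-N, N]`). A generator of `W_s` acting at level `t`
moves beads by `±t` between two runners of the `s`-abacus: it keeps every runner count of the
`t`-abacus, so it fixes `t`-cores; it permutes the runners of the `s`-abacus and commutes with
`n ↦ n + s`, so it maps `s`-cores to `s`-cores; and the change of size it causes depends only on
the `s`-runner counts, that is, only on the `s`-core. Symmetrically for `W_t`. Hence `(u, v)` maps
the partitions with cores `(σ, τ)` bijectively onto those with cores `(uσ, vτ)`, shifting every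
size by `|uσ| - |σ| + |vτ| - |τ|`, and both claims follow.
-/

open Finset Filter Function

lemma StrictAnti.antitone_add_self {e : ℕ → ℤ} (he : StrictAnti e) : Antitone fun r => e r + r :=
  antitone_nat_of_succ_le fun r => by
    have := he (Nat.lt_add_one r)
    push_cast
    omega

namespace BetaSets

open Classical in
noncomputable def window (S : Set ℤ) (N : ℕ) : Finset ℤ :=
  (Icc (-(N : ℤ)) N).filter (· ∈ S)

noncomputable def windowSum (S : Set ℤ) (N : ℕ) (φ : ℤ → ℤ) : ℤ :=
  ∑ x ∈ window S N, φ x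

def residueInd (m : ℕ) (c x : ℤ) : ℤ := if (m : ℤ) ∣ x - c then 1 else 0

/-- The shape of a beta-set, with no condition on the charge. -/
def Admissible (S : Set ℤ) (M : ℕ) : Prop :=
  (∀ x : ℤ, x < -(M : ℤ) → x ∈ S) ∧ ∀ x ∈ S, x ≤ M

/-- On beta-sets this is the relation "same `m`-core": equal numbers of beads on every
runner of the `m`-abacus, compared in a large enough window. -/
def SameResidueCounts (m : ℕ) (S T : Set ℤ) : Prop :=
  ∀ᶠ N in atTop, ∀ c : ℤ, windowSum S N (residueInd m c) = windowSum T N (residueInd m c)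

lemma mem_window {S : Set ℤ} {N : ℕ} {x : ℤ} :
    x ∈ window S N ↔ (-(N : ℤ) ≤ x ∧ x ≤ N) ∧ x ∈ S := by
  simp only [window, mem_filter, mem_Icc]

namespace SameResidueCounts

variable {m : ℕ} {S T U : Set ℤ}

lemma refl (m : ℕ) (S : Set ℤ) : SameResidueCounts m S S :=
  Eventually.of_forall fun _ _ => rfl

lemma symm (h : SameResidueCounts m S T) : SameResidueCounts m T S :=
  h.mono fun _ hN c => (hN c).symm

lemma trans (h₁ : SameResidueCounts m S T) (h₂ : SameResidueCounts m T U) :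
    SameResidueCounts m S U := by
  filter_upwards [h₁, h₂] with N hN₁ hN₂ c
  rw [hN₁, hN₂]

end SameResidueCounts

lemma Admissible.mono {S : Set ℤ} {M M' : ℕ} (hS : Admissible S M) (h : M ≤ M') :
    Admissible S M' := by
  have h' : (M : ℤ) ≤ M' := by exact_mod_cast h
  exact ⟨fun x hx => hS.1 x (by omega), fun x hx => (hS.2 x hx).trans h'⟩

lemma Admissible.image {u : ℤ → ℤ} (hu : Surjective u) {C : ℕ} (hC : ∀ n, |u n - n| ≤ C)
    {S : Set ℤ} {M : ℕ} (hS : Admissible S M) : Admissible (u '' S) (M + C) := by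
  constructor
  · intro x hx
    obtain ⟨y, rfl⟩ := hu x
    have := abs_le.1 (hC y)
    exact ⟨y, hS.1 y (by push_cast at hx; linarith), rfl⟩
  · rintro _ ⟨y, hy, rfl⟩
    have := abs_le.1 (hC y)
    have := hS.2 y hy
    push_cast
    linarith

/-- The boundary sum does not depend on `S`, so it cancels when two sets are compared. -/
lemma windowSum_image_of_involutive {g : ℤ → ℤ} (hg : Involutive g) {C : ℕ}
    (hC : ∀ x, |g x - x| ≤ C) {S : Set ℤ} {M : ℕ} (hS : Admissible S M) {N : ℕ}
    (hN : M + C ≤ N) (φ : ℤ → ℤ) :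
    windowSum (g '' S) N φ = windowSum S N (φ ∘ g) +
      ∑ x ∈ (Icc (-(N : ℤ)) N).filter (fun x => g x < -(N : ℤ)), (φ x - φ (g x)) := by
  classical
  have hMN : (M : ℤ) + C ≤ N := by exact_mod_cast hN
  have hgC : ∀ x, x - C ≤ g x ∧ g x ≤ x + C := fun x => by
    have := abs_le.1 (hC x); constructor <;> linarith
  have mem_image : ∀ x, x ∈ g '' S ↔ g x ∈ S := fun _ =>
    Set.mem_image_iff_of_inverse hg.leftInverse hg.rightInverse
  -- Where `-N ≤ g x`, `g` matches the two windows; where `g x < -N`, both are the set `B`.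
  set B := (Icc (-(N : ℤ)) N).filter (fun x => g x < -(N : ℤ))
  have hB_image : (window (g '' S) N).filter (fun x => ¬ -(N : ℤ) ≤ g x) = B := by
    ext x
    simp only [mem_filter, mem_window, mem_image, B, mem_Icc, not_le]
    exact ⟨fun h => ⟨h.1.1, h.2⟩, fun h => ⟨⟨h.1, hS.1 _ (by omega)⟩, h.2⟩⟩
  have hB : (window S N).filter (fun x => ¬ -(N : ℤ) ≤ g x) = B := by
    ext x
    simp only [mem_filter, mem_window, B, mem_Icc, not_le]
    exact ⟨fun h => ⟨h.1.1, h.2⟩, fun h => ⟨⟨h.1, hS.1 _ (by linarith [hgC x])⟩, h.2⟩⟩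
  have hinterior : ∑ x ∈ (window (g '' S) N).filter (fun x => -(N : ℤ) ≤ g x), φ x =
      ∑ y ∈ (window S N).filter (fun y => -(N : ℤ) ≤ g y), φ (g y) := by
    refine sum_nbij' g g (fun x hx => ?_) (fun y hy => ?_) (fun x _ => hg x) (fun y _ => hg y)
      (fun x _ => by rw [hg])
    · simp only [mem_filter, mem_window, mem_image] at hx ⊢
      have := hS.2 _ hx.1.2
      exact ⟨⟨⟨hx.2, by omega⟩, hx.1.2⟩, by rw [hg]; exact hx.1.1.1⟩
    · simp only [mem_filter, mem_window, mem_image] at hy ⊢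
      have := hS.2 _ hy.1.2
      exact ⟨⟨⟨hy.2, by linarith [hgC y]⟩, by rw [hg]; exact hy.1.2⟩, by rw [hg]; exact hy.1.1.1⟩
  unfold windowSum
  rw [← sum_filter_add_sum_filter_not (window (g '' S) N) (fun x => -(N : ℤ) ≤ g x),
    ← sum_filter_add_sum_filter_not (window S N) (fun x => -(N : ℤ) ≤ g x), hB_image, hB,
    hinterior, sum_sub_distrib]
  simp only [comp_apply]
  ring

lemma windowSum_image_of_comp_eq {g : ℤ → ℤ} (hg : Involutive g) {C : ℕ}
    (hC : ∀ x, |g x - x| ≤ C) {S : Set ℤ} {M : ℕ} (hS : Admissible S M) {N : ℕ}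
    (hN : M + C ≤ N) {φ : ℤ → ℤ} (hφ : ∀ x, φ (g x) = φ x) :
    windowSum (g '' S) N φ = windowSum S N φ := by
  rw [windowSum_image_of_involutive hg hC hS hN, comp_def]
  simp [hφ]

lemma windowSum_image_sub_image {g : ℤ → ℤ} (hg : Involutive g) {C : ℕ}
    (hC : ∀ x, |g x - x| ≤ C) {S T : Set ℤ} {MS MT : ℕ} (hS : Admissible S MS)
    (hT : Admissible T MT) {N : ℕ} (hNS : MS + C ≤ N) (hNT : MT + C ≤ N) (φ : ℤ → ℤ) :
    windowSum (g '' S) N φ - windowSum (g '' T) N φ =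
      windowSum S N (φ ∘ g) - windowSum T N (φ ∘ g) := by
  rw [windowSum_image_of_involutive hg hC hS hNS, windowSum_image_of_involutive hg hC hT hNT]
  ring

lemma window_insert_sdiff {S : Set ℤ} {b b' : ℤ} {N : ℕ} (hb' : -(N : ℤ) ≤ b' ∧ b' ≤ N) :
    window (insert b' (S \ {b})) N = insert b' ((window S N).erase b) := by
  ext x
  simp only [mem_window, mem_insert, mem_erase, Set.mem_insert_iff, Set.mem_sdiff,
    Set.mem_singleton_iff]
  constructor
  · rintro ⟨hx, rfl | ⟨hxS, hxb⟩⟩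
    exacts [Or.inl rfl, Or.inr ⟨hxb, hx, hxS⟩]
  · rintro (rfl | ⟨hxb, hx, hxS⟩)
    exacts [⟨hb', Or.inl rfl⟩, ⟨hx, Or.inr ⟨hxS, hxb⟩⟩]

open Classical in
lemma count_mem_eq_card_window (S : Set ℤ) (N : ℕ) :
    Nat.count (fun k => (N : ℤ) - k ∈ S) (2 * N + 1) = (window S N).card := by
  rw [Nat.count_eq_card_filter_range]
  refine card_nbij' (fun k => (N : ℤ) - k) (fun x => ((N : ℤ) - x).toNat) ?_ ?_ ?_ ?_
  · intro k hk
    simp only [coe_filter, mem_range, Set.mem_ofPred_eq, mem_coe, mem_window] at hk ⊢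
    exact ⟨⟨by omega, by omega⟩, hk.2⟩
  · intro x hx
    simp only [coe_filter, mem_range, Set.mem_ofPred_eq, mem_coe, mem_window] at hx ⊢
    exact ⟨by omega, by rw [Int.toNat_of_nonneg (by omega), sub_sub_cancel]; exact hx.2⟩
  · intro k _
    simp
  · intro x hx
    simp only [mem_coe, mem_window] at hx
    simp only
    omega

section

variable {S : Set ℤ} {b b' : ℤ} {N : ℕ}

lemma card_window_insert_sdiff (hb : b ∈ window S N) (hb' : b' ∉ S)
    (hb'N : -(N : ℤ) ≤ b' ∧ b' ≤ N) :
    (window (insert b' (S \ {b})) N).card = (window S N).card := by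
  have : b' ∉ (window S N).erase b := fun h => hb' (mem_window.1 (mem_of_mem_erase h)).2
  rw [window_insert_sdiff hb'N, card_insert_of_notMem this, card_erase_add_one hb]

lemma windowSum_insert_sdiff (hb : b ∈ window S N) (hb' : b' ∉ S)
    (hb'N : -(N : ℤ) ≤ b' ∧ b' ≤ N) (φ : ℤ → ℤ) :
    windowSum (insert b' (S \ {b})) N φ = windowSum S N φ + φ b' - φ b := by
  have : b' ∉ (window S N).erase b := fun h => hb' (mem_window.1 (mem_of_mem_erase h)).2
  rw [windowSum, window_insert_sdiff hb'N, sum_insert this, windowSum, ← add_sum_erase _ _ hb]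
  ring

end

def DownClosed (s : ℕ) (S : Set ℤ) : Prop := ∀ x ∈ S, x - s ∈ S

lemma DownClosed.mem_of_le {s : ℕ} {S : Set ℤ} (hS : DownClosed s S) {x y : ℤ} (hx : x ∈ S)
    (hyx : y ≤ x) (hdvd : (s : ℤ) ∣ x - y) : y ∈ S := by
  obtain ⟨d, hd⟩ := hdvd
  rcases (Int.natCast_nonneg s).eq_or_lt with hs | hs
  · rw [← hs, zero_mul, sub_eq_zero] at hd
    rwa [← hd]
  obtain ⟨k, rfl⟩ := Int.eq_ofNat_of_zero_le (nonneg_of_mul_nonneg_right (hd ▸ sub_nonneg.2 hyx) hs)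
  rw [show y = x - s * k by linarith]
  clear hd hyx
  induction k with
  | zero => simpa using hx
  | succ k ih => simpa [mul_add, sub_add_eq_sub_sub] using hS _ ih

/-- A down-closed set meets each residue class in a downward ray, which is determined by the
number of its elements in a large window. -/
lemma DownClosed.eq_of_sameResidueCounts {s : ℕ} {S T : Set ℤ} (hS : DownClosed s S)
    (hT : DownClosed s T) (h : SameResidueCounts s S T) : S = T := by
  suffices key : ∀ {S T : Set ℤ}, DownClosed s S → DownClosed s T → SameResidueCounts s S T →
      S ⊆ T from (key hS hT h).antisymm (key hT hS h.symm)
  intro S T hS hT h x hxS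
  by_contra hxT
  obtain ⟨N, hN, hxN⟩ := (h.and (eventually_ge_atTop x.natAbs)).exists
  have hsub : (window T N).filter (fun y => (s : ℤ) ∣ y - x) ⊂
      (window S N).filter (fun y => (s : ℤ) ∣ y - x) := by
    refine Finset.ssubset_iff_subset_ne.2 ⟨fun y hy => ?_, fun heq => ?_⟩
    · simp only [mem_filter, mem_window] at hy ⊢
      refine ⟨⟨hy.1.1, ?_⟩, hy.2⟩
      rcases le_or_gt y x with hyx | hxy
      · exact hS.mem_of_le hxS hyx ((dvd_sub_comm).1 hy.2)
      · exact absurd (hT.mem_of_le hy.1.2 hxy.le hy.2) hxT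
    · have : x ∈ (window S N).filter (fun y => (s : ℤ) ∣ y - x) := by
        simp only [mem_filter, mem_window, sub_self, dvd_zero, and_true]
        exact ⟨⟨by omega, by omega⟩, hxS⟩
      rw [← heq] at this
      exact hxT (mem_window.1 (mem_filter.1 this).1).2
  have hcount := hN x
  simp only [windowSum, residueInd, sum_ite, sum_const_zero, add_zero, sum_const,
    nsmul_eq_mul, mul_one] at hcount
  exact absurd (by exact_mod_cast hcount) (card_lt_card hsub).ne'

def swapClasses (s t : ℕ) (a n : ℤ) : ℤ :=
  if (s : ℤ) ∣ n - a then n + t else if (s : ℤ) ∣ n - (a + t) then n - t else n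

lemma wgen_eq_swapClasses (s t : ℕ) (i : ℤ) :
    wgen s t i = swapClasses s t ((i - 1) * t - ((s : ℤ) - 1) * ((t : ℤ) - 1) / 2) := by
  funext n
  simp only [wgen, swapClasses]
  congr 2 <;> ring_nf

section swapClasses

variable {s t : ℕ} {a : ℤ}

lemma dvd_sub_iff_of_dvd_sub {d x y c : ℤ} (h : d ∣ x - y) : d ∣ x - c ↔ d ∣ y - c := by
  rw [show x - c = (x - y) + (y - c) by ring, dvd_add_right h]

lemma swapClasses_sub_self_eq_of_dvd {n n' : ℤ} (h : (s : ℤ) ∣ n - n') :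
    swapClasses s t a n - n = swapClasses s t a n' - n' := by
  simp only [swapClasses, dvd_sub_iff_of_dvd_sub h]
  split_ifs <;> ring

lemma swapClasses_add_modulus (n : ℤ) : swapClasses s t a (n + s) = swapClasses s t a n + s := by
  have := swapClasses_sub_self_eq_of_dvd (t := t) (a := a) (n := n + s) (n' := n)
    (by rw [add_sub_cancel_left])
  linarith

lemma abs_swapClasses_sub_self_le (n : ℤ) : |swapClasses s t a n - n| ≤ t := by
  unfold swapClasses
  split_ifs <;> simp

lemma swapClasses_sub_self_dvd (n : ℤ) : (t : ℤ) ∣ swapClasses s t a n - n := by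
  unfold swapClasses
  split_ifs <;> simp

lemma swapClasses_involutive (hst : ¬ (s : ℤ) ∣ t) : Involutive (swapClasses s t a) := by
  intro n
  unfold swapClasses
  by_cases hA : (s : ℤ) ∣ n - a
  · have hA' : ¬ (s : ℤ) ∣ n + t - a := fun h => hst (by simpa using dvd_sub h hA)
    simp only [hA, hA', if_true, if_false, show n + t - (a + t) = n - a by ring]
    ring
  by_cases hB : (s : ℤ) ∣ n - (a + t)
  · simp only [hA, hB, if_true, if_false, show n - t - a = n - (a + t) by ring]
    ring
  · simp [hA, hB]

lemma swapClasses_sub_self (hst : ¬ (s : ℤ) ∣ t) (n : ℤ) :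
    swapClasses s t a n - n = t * (residueInd s a n - residueInd s (a + t) n) := by
  unfold swapClasses residueInd
  by_cases hA : (s : ℤ) ∣ n - a
  · have hB : ¬ (s : ℤ) ∣ n - (a + t) := fun h => hst (by simpa using dvd_sub hA h)
    simp [hA, hB]
  · by_cases hB : (s : ℤ) ∣ n - (a + t) <;> simp [hA, hB]

/-- The map permutes residue classes mod `s`, and is its own inverse on them. -/
lemma residueInd_swapClasses (hst : ¬ (s : ℤ) ∣ t) (c n : ℤ) :
    residueInd s c (swapClasses s t a n) = residueInd s (swapClasses s t a c) n := by
  have hcongr : ∀ {x y : ℤ}, (s : ℤ) ∣ x - y →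
      (s : ℤ) ∣ swapClasses s t a x - swapClasses s t a y := fun {x y} h => by
    have := swapClasses_sub_self_eq_of_dvd (t := t) (a := a) h
    rwa [show swapClasses s t a x - swapClasses s t a y = x - y by linarith]
  have hinv := swapClasses_involutive (a := a) hst
  unfold residueInd
  congr 1
  refine propext ⟨fun h => ?_, fun h => ?_⟩
  · simpa [hinv n] using hcongr h
  · simpa [hinv c] using hcongr h

end swapClasses

lemma residueInd_eq_of_dvd_sub {m : ℕ} {x y : ℤ} (h : (m : ℤ) ∣ x - y) (c : ℤ) :
    residueInd m c x = residueInd m c y := by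
  simp only [residueInd, dvd_sub_iff_of_dvd_sub h]

/-- The properties of the level-`t` action of `W_s` that the argument needs. The last field
says that `u` changes the size of two beta-sets with the same `s`-core by the same amount. -/
structure IsLevelMap (s t : ℕ) (u : ℤ → ℤ) : Prop where
  bijective : Bijective u
  exists_bound : ∃ C : ℕ, ∀ n, |u n - n| ≤ C
  map_add_modulus : ∀ n, u (n + s) = u n + s
  card_window_image : ∀ S M, Admissible S M →
    ∀ᶠ N in atTop, (window (u '' S) N).card = (window S N).card
  sameResidueCounts_image : ∀ S M, Admissible S M → SameResidueCounts t (u '' S) S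
  sameResidueCounts_image_image : ∀ S T MS MT, Admissible S MS → Admissible T MT →
    SameResidueCounts s S T → SameResidueCounts s (u '' S) (u '' T)
  windowSum_id_image : ∀ S T MS MT, Admissible S MS → Admissible T MT →
    SameResidueCounts s S T → ∀ᶠ N in atTop,
      windowSum (u '' S) N id - windowSum S N id = windowSum (u '' T) N id - windowSum T N id

namespace IsLevelMap

variable {s t : ℕ} {u v : ℤ → ℤ}

lemma admissible_image (hu : IsLevelMap s t u) {S : Set ℤ} {M : ℕ} (hS : Admissible S M) :
    ∃ M', Admissible (u '' S) M' :=
  let ⟨_, hC⟩ := hu.exists_bound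
  ⟨_, hS.image hu.bijective.2 hC⟩

lemma comp (hu : IsLevelMap s t u) (hv : IsLevelMap s t v) : IsLevelMap s t (u ∘ v) where
  bijective := hu.bijective.comp hv.bijective
  exists_bound := by
    obtain ⟨Cu, hCu⟩ := hu.exists_bound
    obtain ⟨Cv, hCv⟩ := hv.exists_bound
    refine ⟨Cu + Cv, fun n => ?_⟩
    calc |u (v n) - n| = |(u (v n) - v n) + (v n - n)| := by ring_nf
      _ ≤ |u (v n) - v n| + |v n - n| := abs_add_le _ _
      _ ≤ Cu + Cv := by exact_mod_cast add_le_add (hCu _) (hCv _)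
  map_add_modulus n := by simp only [comp_apply, hv.map_add_modulus, hu.map_add_modulus]
  card_window_image S M hS := by
    obtain ⟨M', hS'⟩ := hv.admissible_image hS
    filter_upwards [hv.card_window_image S M hS, hu.card_window_image _ M' hS'] with N hv hu
    rw [Set.image_comp, hu, hv]
  sameResidueCounts_image S M hS := by
    obtain ⟨M', hS'⟩ := hv.admissible_image hS
    rw [Set.image_comp]
    exact (hu.sameResidueCounts_image _ M' hS').trans (hv.sameResidueCounts_image S M hS)
  sameResidueCounts_image_image S T MS MT hS hT h := by
    obtain ⟨MS', hS'⟩ := hv.admissible_image hS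
    obtain ⟨MT', hT'⟩ := hv.admissible_image hT
    rw [Set.image_comp, Set.image_comp]
    exact hu.sameResidueCounts_image_image _ _ MS' MT' hS' hT'
      (hv.sameResidueCounts_image_image S T MS MT hS hT h)
  windowSum_id_image S T MS MT hS hT h := by
    obtain ⟨MS', hS'⟩ := hv.admissible_image hS
    obtain ⟨MT', hT'⟩ := hv.admissible_image hT
    filter_upwards [hv.windowSum_id_image S T MS MT hS hT h,
      hu.windowSum_id_image _ _ MS' MT' hS' hT'
        (hv.sameResidueCounts_image_image S T MS MT hS hT h)] with N hv hu
    rw [Set.image_comp, Set.image_comp]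
    linarith

end IsLevelMap

lemma isLevelMap_id (s t : ℕ) : IsLevelMap s t id where
  bijective := bijective_id
  exists_bound := ⟨0, by simp⟩
  map_add_modulus := by simp
  card_window_image := by simp
  sameResidueCounts_image := by simp [SameResidueCounts.refl]
  sameResidueCounts_image_image := by simp
  windowSum_id_image _ _ _ _ _ _ h := h.mono fun _ _ => by simp

lemma isLevelMap_swapClasses {s t : ℕ} (hst : ¬ (s : ℤ) ∣ t) (a : ℤ) :
    IsLevelMap s t (swapClasses s t a) := by
  have hg := swapClasses_involutive (a := a) hst
  have hC : ∀ n, |swapClasses s t a n - n| ≤ t := abs_swapClasses_sub_self_le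
  refine ⟨hg.bijective, ⟨t, hC⟩, swapClasses_add_modulus, fun S M hS => ?_, fun S M hS => ?_,
    fun S T MS MT hS hT h => ?_, fun S T MS MT hS hT h => ?_⟩
  · filter_upwards [eventually_ge_atTop (M + t)] with N hN
    have := windowSum_image_of_comp_eq hg hC hS hN (φ := fun _ => 1) fun _ => rfl
    simpa [windowSum] using this
  · filter_upwards [eventually_ge_atTop (M + t)] with N hN c
    exact windowSum_image_of_comp_eq hg hC hS hN fun n =>
      residueInd_eq_of_dvd_sub (swapClasses_sub_self_dvd n) c
  · filter_upwards [h, eventually_ge_atTop (MS + t), eventually_ge_atTop (MT + t)]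
      with N hN hNS hNT c
    have := windowSum_image_sub_image hg hC hS hT hNS hNT (residueInd s c)
    simp only [comp_def, residueInd_swapClasses hst, hN] at this
    linarith
  · filter_upwards [h, eventually_ge_atTop (MS + t), eventually_ge_atTop (MT + t)]
      with N hN hNS hNT
    have hid : id ∘ swapClasses s t a =
        fun n => n + t * (residueInd s a n - residueInd s (a + t) n) := by
      funext n
      rw [comp_apply, id_eq, ← swapClasses_sub_self hst]
      ring
    have := windowSum_image_sub_image hg hC hS hT hNS hNT id
    simp only [hid, windowSum, sum_add_distrib, ← mul_sum, sum_sub_distrib] at this hN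
    simp only [windowSum, hN a, hN (a + t), id_eq] at this ⊢
    linarith

lemma WMon.isLevelMap {s t : ℕ} (hst : ¬ (s : ℤ) ∣ t) {u : Function.End ℤ} (hu : u ∈ WMon s t) :
    IsLevelMap s t u := by
  induction hu using Submonoid.closure_induction with
  | mem x hx =>
    obtain ⟨i, rfl⟩ := hx
    rw [wgen_eq_swapClasses]
    exact isLevelMap_swapClasses hst _
  | one => exact isLevelMap_id s t
  | mul x y _ _ hx hy => exact hx.comp hy

lemma WMon.exists_leftInverse {s t : ℕ} (hst : ¬ (s : ℤ) ∣ t) {u : Function.End ℤ}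
    (hu : u ∈ WMon s t) : ∃ u' ∈ WMon s t, LeftInverse u' u := by
  induction hu using Submonoid.closure_induction with
  | mem x hx =>
    obtain ⟨i, rfl⟩ := hx
    refine ⟨wgen s t i, Submonoid.subset_closure ⟨i, rfl⟩, ?_⟩
    rw [wgen_eq_swapClasses]
    exact swapClasses_involutive hst
  | one => exact ⟨1, Submonoid.one_mem _, fun _ => rfl⟩
  | mul x y _ _ hx hy =>
    obtain ⟨x', hx'W, hx'⟩ := hx
    obtain ⟨y', hy'W, hy'⟩ := hy
    exact ⟨y' * x', Submonoid.mul_mem _ hy'W hx'W, hx'.comp hy'⟩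

end BetaSets

namespace SeqPartition

open BetaSets

def betaFun (l : SeqPartition) (r : ℕ) : ℤ := l.parts r - (r + 1)

lemma betaSet_eq_range (l : SeqPartition) : l.betaSet = Set.range l.betaFun := rfl

lemma betaFun_strictAnti (l : SeqPartition) : StrictAnti l.betaFun :=
  strictAnti_nat_of_succ_lt fun r => by
    have := l.antitone (Nat.le_add_right r 1)
    simp only [betaFun]
    omega

lemma ext_of_betaSet {l m : SeqPartition} (h : l.betaSet = m.betaSet) : l = m := by
  have hfun : l.betaFun = m.betaFun :=
    (l.betaFun_strictAnti.dual_right.range_inj m.betaFun_strictAnti.dual_right).1 h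
  obtain ⟨lp, _⟩ := l
  obtain ⟨mp, _⟩ := m
  have : lp = mp := Finsupp.ext fun r => by
    have := congrFun hfun r
    simp only [betaFun] at this
    omega
  subst this
  rfl

def bound (l : SeqPartition) : ℕ := l.parts.support.sup id + 1 + l.parts 0

lemma parts_eq_zero_of_bound_le {l : SeqPartition} {r : ℕ} (h : l.bound ≤ r) : l.parts r = 0 := by
  by_contra hr
  have := le_sup (f := id) (Finsupp.mem_support_iff.2 hr)
  simp only [bound, id] at this h
  omega

lemma parts_le_bound (l : SeqPartition) (r : ℕ) : l.parts r ≤ l.bound :=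
  (l.antitone r.zero_le).trans (by simp only [bound]; omega)

lemma betaFun_of_bound_le {l : SeqPartition} {r : ℕ} (h : l.bound ≤ r) :
    l.betaFun r = -(r + 1) := by
  simp [betaFun, parts_eq_zero_of_bound_le h]

lemma admissible_betaSet (l : SeqPartition) : Admissible l.betaSet l.bound := by
  refine ⟨fun x hx => ⟨(-x - 1).toNat, ?_⟩, ?_⟩
  · change l.betaFun _ = x
    rw [betaFun_of_bound_le (by omega)]
    omega
  · rintro _ ⟨r, rfl⟩
    have := l.parts_le_bound r
    change l.betaFun r ≤ _
    simp only [betaFun]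
    omega

lemma window_betaSet {l : SeqPartition} {N : ℕ} (hN : l.bound ≤ N) :
    window l.betaSet N = (range N).image l.betaFun := by
  ext x
  simp only [mem_window, mem_image, mem_range, betaSet_eq_range, Set.mem_range]
  constructor
  · rintro ⟨⟨hxN, -⟩, r, rfl⟩
    refine ⟨r, ?_, rfl⟩
    by_contra hr
    rw [betaFun_of_bound_le (by omega)] at hxN
    omega
  · rintro ⟨r, hr, rfl⟩
    have := l.parts_le_bound r
    simp only [betaFun]
    exact ⟨⟨by omega, by omega⟩, r, rfl⟩

lemma card_window_betaSet {l : SeqPartition} {N : ℕ} (hN : l.bound ≤ N) :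
    (window l.betaSet N).card = N := by
  rw [window_betaSet hN, card_image_of_injective _ l.betaFun_strictAnti.injective, card_range]

lemma size_eq_sum_range {l : SeqPartition} {N : ℕ} (hN : l.bound ≤ N) :
    l.size = ∑ r ∈ range N, l.parts r := by
  refine Finsupp.sum_of_support_subset _ (fun r hr => mem_range.2 ?_) _ fun _ _ => rfl
  by_contra h
  exact Finsupp.mem_support_iff.1 hr (parts_eq_zero_of_bound_le (by omega))

lemma windowSum_betaSet_id {l : SeqPartition} {N : ℕ} (hN : l.bound ≤ N) :
    windowSum l.betaSet N id = l.size - ∑ r ∈ range N, ((r : ℤ) + 1) := by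
  rw [windowSum, window_betaSet hN, sum_image l.betaFun_strictAnti.injective.injOn,
    size_eq_sum_range hN]
  simp [betaFun, sum_sub_distrib]

lemma size_sub_size_eq {l m : SeqPartition} {N : ℕ} (hl : l.bound ≤ N) (hm : m.bound ≤ N) :
    (l.size : ℤ) - m.size = windowSum l.betaSet N id - windowSum m.betaSet N id := by
  rw [windowSum_betaSet_id hl, windowSum_betaSet_id hm]
  ring

lemma exists_betaFun_eq {e : ℕ → ℤ} (he : StrictAnti e) {R : ℕ}
    (htail : ∀ r, R ≤ r → e r = -(r + 1)) : ∃ l : SeqPartition, l.betaFun = e := by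
  have hnonneg : ∀ r, 0 ≤ e r + r + 1 := fun r => by
    have := he.antitone_add_self (le_max_left r R)
    have := htail _ (le_max_right r R)
    simp only at *
    omega
  let parts : ℕ →₀ ℕ := Finsupp.onFinset (range R) (fun r => (e r + r + 1).toNat) fun r hr => by
    by_contra h
    rw [mem_range, not_lt] at h
    simp [htail r h] at hr
  refine ⟨⟨parts, fun i j hij => ?_⟩, funext fun r => ?_⟩
  · have := he.antitone_add_self hij
    simp only [parts, Finsupp.onFinset_apply] at this ⊢
    exact Int.toNat_le_toNat (by omega)
  · have := hnonneg r
    simp only [betaFun, parts, Finsupp.onFinset_apply]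
    omega

/-- The hypothesis on the cardinality says that `S` has charge zero. The elements of `S`, in
decreasing order, are `N - nth p r`. -/
lemma exists_betaSet_eq {S : Set ℤ} {N : ℕ} (hS : Admissible S N)
    (hcard : (window S N).card = N) : ∃ l : SeqPartition, l.betaSet = S := by
  classical
  set p : ℕ → Prop := fun k => (N : ℤ) - k ∈ S
  have htail : ∀ k, 2 * N + 1 ≤ k → p k := fun k hk => hS.1 _ (by omega)
  have hinf : (Set.ofPred p).Infinite := Set.infinite_of_forall_exists_gt fun k =>
    ⟨k + 2 * N + 1, htail _ (by omega), by omega⟩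
  have hcount : Nat.count p (2 * N + 1) = N := (count_mem_eq_card_window S N).trans hcard
  have hcount_tail : ∀ j, Nat.count p (2 * N + 1 + j) = N + j := fun j => by
    induction j with
    | zero => exact hcount
    | succ j ih => rw [← add_assoc, Nat.count_succ, ih, if_pos (htail _ (by omega))]; rfl
  have hnth_tail : ∀ j, Nat.nth p (N + j) = 2 * N + 1 + j := fun j => by
    rw [← hcount_tail j, Nat.nth_count (htail _ (by omega))]
  obtain ⟨l, hl⟩ := exists_betaFun_eq (e := fun r => (N : ℤ) - Nat.nth p r)
    (fun i j hij => by simpa using Nat.nth_strictMono hinf hij) (R := N) fun r hr => by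
      obtain ⟨j, rfl⟩ := Nat.exists_eq_add_of_le hr
      rw [hnth_tail]
      push_cast
      ring
  refine ⟨l, ?_⟩
  ext x
  rw [betaSet_eq_range, hl]
  constructor
  · rintro ⟨r, rfl⟩
    exact Nat.nth_mem_of_infinite hinf r
  · intro hx
    have hxN := hS.2 x hx
    have hk : p ((N : ℤ) - x).toNat := by
      simp only [p, Int.toNat_of_nonneg (sub_nonneg.2 hxN), sub_sub_cancel, hx]
    obtain ⟨r, hr⟩ := (Set.ext_iff.1 (Nat.range_nth_of_infinite hinf) _).2 hk
    exact ⟨r, by simp only [hr]; omega⟩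

section

variable {h s : ℕ} {l m σ : SeqPartition}

lemma le_bound_of_mem_betaSet {b : ℤ} (hb : b ∈ l.betaSet) : b ≤ l.bound :=
  l.admissible_betaSet.2 b hb

lemma neg_bound_le_of_notMem_betaSet {b : ℤ} (hb : b ∉ l.betaSet) : -(l.bound : ℤ) ≤ b :=
  not_lt.1 fun h => hb (l.admissible_betaSet.1 b h)

lemma RemoveHook.windowSum_eq (hr : RemoveHook h l m) : ∃ b : ℤ, ∀ N, l.bound ≤ N → ∀ φ,
    windowSum m.betaSet N φ = windowSum l.betaSet N φ + φ (b - h) - φ b := by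
  obtain ⟨b, hb, hbh, hm⟩ := hr
  refine ⟨b, fun N hN φ => ?_⟩
  have hbN := le_bound_of_mem_betaSet hb
  have hbhN := neg_bound_le_of_notMem_betaSet hbh
  rw [hm]
  exact windowSum_insert_sdiff (mem_window.2 ⟨⟨by omega, by omega⟩, hb⟩) hbh
    ⟨by omega, by omega⟩ φ

lemma RemoveHook.size_eq (hr : RemoveHook h l m) : (m.size : ℤ) = l.size - h := by
  obtain ⟨b, hb⟩ := hr.windowSum_eq
  have := hb (max l.bound m.bound) (le_max_left _ _) id
  have := size_sub_size_eq (l := m) (m := l) (le_max_right _ _) (le_max_left _ _)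
  simp only [id_eq] at *
  linarith

lemma RemoveHook.sameResidueCounts (hr : RemoveHook s l m) :
    SameResidueCounts s m.betaSet l.betaSet := by
  obtain ⟨b, hb⟩ := hr.windowSum_eq
  filter_upwards [eventually_ge_atTop l.bound] with N hN c
  rw [hb N hN, residueInd_eq_of_dvd_sub (by rw [sub_sub_cancel_left, dvd_neg]) c]
  ring

lemma exists_removeHook {b : ℤ} (hb : b ∈ l.betaSet) (hbh : b - h ∉ l.betaSet) :
    ∃ m, RemoveHook h l m := by
  have hbN := le_bound_of_mem_betaSet hb
  have hbhN := neg_bound_le_of_notMem_betaSet hbh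
  have hbw : b ∈ window l.betaSet l.bound := mem_window.2 ⟨⟨by omega, by omega⟩, hb⟩
  have hadm : Admissible (insert (b - h) (l.betaSet \ {b})) l.bound := by
    refine ⟨fun x hx => Or.inr ⟨l.admissible_betaSet.1 x hx, by rintro rfl; omega⟩, ?_⟩
    rintro x (rfl | ⟨hx, -⟩)
    exacts [by omega, l.admissible_betaSet.2 x hx]
  obtain ⟨m, hm⟩ := exists_betaSet_eq hadm (by
    rw [card_window_insert_sdiff hbw hbh ⟨by omega, by omega⟩, card_window_betaSet le_rfl])
  exact ⟨m, b, hb, hbh, hm⟩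

lemma isCore_iff_downClosed : IsCore s l ↔ DownClosed s l.betaSet := by
  refine ⟨fun hl x hx => ?_, fun hl m ⟨b, hb, hbs, _⟩ => hbs (hl b hb)⟩
  by_contra hxs
  obtain ⟨m, hm⟩ := exists_removeHook hx hxs
  exact hl m hm

lemma exists_hasCore (hs : 0 < s) (l : SeqPartition) : ∃ c, HasCore s l c := by
  induction hn : l.size using Nat.strong_induction_on generalizing l with
  | _ n ih =>
    by_cases hl : IsCore s l
    · exact ⟨l, .refl, hl⟩
    obtain ⟨m, hm⟩ := not_forall_not.1 hl
    obtain ⟨c, hmc, hc⟩ := ih m.size (by have := hm.size_eq; omega) m rfl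
    exact ⟨c, .head hm hmc, hc⟩

lemma HasCore.sameResidueCounts (hσ : HasCore s l σ) :
    SameResidueCounts s σ.betaSet l.betaSet := by
  obtain ⟨hchain, -⟩ := hσ
  induction hchain with
  | refl => exact .refl s _
  | tail _ hstep ih => exact hstep.sameResidueCounts.trans ih

lemma eq_of_isCore_of_sameResidueCounts {τ : SeqPartition} (hσ : IsCore s σ) (hτ : IsCore s τ)
    (h : SameResidueCounts s σ.betaSet τ.betaSet) : σ = τ :=
  ext_of_betaSet <| (isCore_iff_downClosed.1 hσ).eq_of_sameResidueCounts
    (isCore_iff_downClosed.1 hτ) h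

lemma HasCore.unique {τ : SeqPartition} (hσ : HasCore s l σ) (hτ : HasCore s l τ) : σ = τ :=
  eq_of_isCore_of_sameResidueCounts hσ.2 hτ.2 (hσ.sameResidueCounts.trans hτ.sameResidueCounts.symm)

lemma hasCore_iff (hs : 0 < s) :
    HasCore s l σ ↔ IsCore s σ ∧ SameResidueCounts s σ.betaSet l.betaSet := by
  refine ⟨fun h => ⟨h.2, h.sameResidueCounts⟩, fun ⟨hσ, hσl⟩ => ?_⟩
  obtain ⟨c, hc⟩ := exists_hasCore hs l
  rwa [eq_of_isCore_of_sameResidueCounts hσ hc.2 (hσl.trans hc.sameResidueCounts.symm)]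

end

section

variable {s t : ℕ} {u v : ℤ → ℤ}

lemma isCore_of_betaSet_eq_image (hu : IsLevelMap s t u) {σ σ' : SeqPartition}
    (hσ : IsCore s σ) (hσ' : σ'.betaSet = u '' σ.betaSet) : IsCore s σ' := by
  rw [isCore_iff_downClosed, hσ']
  rintro _ ⟨y, hy, rfl⟩
  refine ⟨y - s, isCore_iff_downClosed.1 hσ y hy, ?_⟩
  have := hu.map_add_modulus (y - s)
  rw [sub_add_cancel] at this
  linarith

lemma exists_betaSet_eq_image (hu : IsLevelMap s t u) (l : SeqPartition) :
    ∃ l' : SeqPartition, l'.betaSet = u '' l.betaSet := by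
  obtain ⟨C, hC⟩ := hu.exists_bound
  obtain ⟨N, hcard, hN⟩ := ((hu.card_window_image _ _ l.admissible_betaSet).and
    (eventually_ge_atTop (l.bound + C))).exists
  exact exists_betaSet_eq ((l.admissible_betaSet.image hu.bijective.2 hC).mono hN)
    (by rw [hcard, card_window_betaSet (by omega)])

/-- The heart of the argument: `u ∈ W_s` moves the `s`-core and fixes the `t`-core, `v ∈ W_t`
does the opposite, and each changes the size of `l` exactly as it changes the size of the core
it moves. -/
lemma hasCore_image (hs : 0 < s) (ht : 0 < t) (hu : IsLevelMap s t u) (hv : IsLevelMap t s v)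
    {l l' σ τ σ' τ' : SeqPartition} (hσ : HasCore s l σ) (hτ : HasCore t l τ)
    (hl' : l'.betaSet = u '' (v '' l.betaSet)) (hσ' : σ'.betaSet = u '' σ.betaSet)
    (hτ' : τ'.betaSet = v '' τ.betaSet) :
    HasCore s l' σ' ∧ HasCore t l' τ' ∧
      (l'.size : ℤ) = l.size - σ.size - τ.size + σ'.size + τ'.size := by
  have hl := l.admissible_betaSet
  obtain ⟨M, hvl⟩ := hv.admissible_image hl
  have hσs : SameResidueCounts s σ.betaSet (v '' l.betaSet) :=
    hσ.sameResidueCounts.trans (hv.sameResidueCounts_image _ _ hl).symm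
  have hτt := hτ.sameResidueCounts
  refine ⟨(hasCore_iff hs).2 ⟨isCore_of_betaSet_eq_image hu hσ.2 hσ', ?_⟩,
    (hasCore_iff ht).2 ⟨isCore_of_betaSet_eq_image hv hτ.2 hτ', ?_⟩, ?_⟩
  · rw [hσ', hl']
    exact hu.sameResidueCounts_image_image _ _ _ _ σ.admissible_betaSet hvl hσs
  · rw [hτ', hl']
    exact (hv.sameResidueCounts_image_image _ _ _ _ τ.admissible_betaSet hl hτt).trans
      (hu.sameResidueCounts_image _ _ hvl).symm
  obtain ⟨N, ⟨⟨hsize_u, hsize_v⟩, hN⟩⟩ :=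
    (((hu.windowSum_id_image _ _ _ _ σ.admissible_betaSet hvl hσs).and
      (hv.windowSum_id_image _ _ _ _ τ.admissible_betaSet hl hτt)).and
      (eventually_ge_atTop (l.bound ⊔ l'.bound ⊔ σ.bound ⊔ τ.bound ⊔ σ'.bound ⊔ τ'.bound))).exists
  rw [← hσ', ← hl'] at hsize_u
  rw [← hτ'] at hsize_v
  simp only [sup_le_iff] at hN
  obtain ⟨⟨⟨⟨⟨hNl, hNl'⟩, hNσ⟩, hNτ⟩, hNσ'⟩, hNτ'⟩ := hN
  have := size_sub_size_eq hNl' hNl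
  have := size_sub_size_eq hNσ' hNσ
  have := size_sub_size_eq hNτ' hNτ
  linarith

lemma le_size_of_hasCore (hs : 0 < s) (ht : 0 < t) (hu : IsLevelMap s t u)
    (hv : IsLevelMap t s v) {σ τ σ' τ' : SeqPartition} (hσ' : σ'.betaSet = u '' σ.betaSet)
    (hτ' : τ'.betaSet = v '' τ.betaSet) {n : ℕ}
    (hn : ∀ l', HasCore s l' σ' → HasCore t l' τ' → n ≤ l'.size)
    {l : SeqPartition} (hσ : HasCore s l σ) (hτ : HasCore t l τ) :
    (n : ℤ) ≤ l.size - σ.size - τ.size + σ'.size + τ'.size := by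
  obtain ⟨lv, hlv⟩ := exists_betaSet_eq_image hv l
  obtain ⟨l', hl'⟩ := exists_betaSet_eq_image hu lv
  obtain ⟨hσl', hτl', hsize⟩ := hasCore_image hs ht hu hv hσ hτ (hl'.trans (by rw [hlv])) hσ' hτ'
  have := hn l' hσl' hτl'
  omega

lemma minimalPart_of_betaSet_eq_image (hs : 0 < s) (ht : 0 < t) {u' v' : ℤ → ℤ}
    (hu : IsLevelMap s t u) (hv : IsLevelMap t s v) (hu' : IsLevelMap s t u')
    (hv' : IsLevelMap t s v') (huu' : LeftInverse u' u) (hvv' : LeftInverse v' v)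
    {l m : SeqPartition} (hm : m.betaSet = u '' (v '' l.betaSet)) (hl : MinimalPart s t l) :
    MinimalPart s t m := by
  intro m₂ σ₂ τ₂ hmσ hmτ hm₂σ hm₂τ
  obtain ⟨σ, hσ⟩ := exists_hasCore hs l
  obtain ⟨τ, hτ⟩ := exists_hasCore ht l
  obtain ⟨σ', hσ'⟩ := exists_betaSet_eq_image hu σ
  obtain ⟨τ', hτ'⟩ := exists_betaSet_eq_image hv τ
  obtain ⟨hmσ', hmτ', hsize⟩ := hasCore_image hs ht hu hv hσ hτ hm hσ' hτ'
  obtain rfl := hmσ.unique hmσ'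
  obtain rfl := hmτ.unique hmτ'
  have := le_size_of_hasCore hs ht hu' hv' (by rw [hσ', huu'.image_image])
    (by rw [hτ', hvv'.image_image]) (fun l' => hl l' σ τ hσ hτ) hm₂σ hm₂τ
  omega

end

end SeqPartition

open BetaSets SeqPartition

lemma not_natCast_dvd_of_coprime {s t : ℕ} (hst : Nat.Coprime s t) (hs : 1 < s) :
    ¬ (s : ℤ) ∣ t := fun h => by
  have := hst.eq_one_of_dvd (Int.natCast_dvd_natCast.1 h)
  omega

/-- the set of `(s,t)`-minimal partitions is preserved by the
action of `W_s × W_t`, and `m_{uσ,vτ} = m_{σ,τ} − |σ| − |τ| + |uσ| + |vτ|`. -/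
theorem stmt19 (s t : ℕ) (hs : 1 < s) (ht : 1 < t) (hst : Nat.Coprime s t)
    (u v : Function.End ℤ) (hu : u ∈ WMon s t) (hv : v ∈ WMon t s) :
    (∀ l m : SeqPartition, m.betaSet = (fun b => u (v b)) '' l.betaSet →
      MinimalPart s t l → MinimalPart s t m) ∧
    (∀ σ τ σ' τ' : SeqPartition,
      SeqPartition.IsCore s σ → SeqPartition.IsCore t τ →
      σ'.betaSet = (fun b => u b) '' σ.betaSet →
      τ'.betaSet = (fun b => v b) '' τ.betaSet →
      ∀ m m' : ℕ,
      ((∃ l : SeqPartition, l.size = m ∧ SeqPartition.HasCore s l σ ∧ SeqPartition.HasCore t l τ) ∧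
        ∀ l : SeqPartition, SeqPartition.HasCore s l σ → SeqPartition.HasCore t l τ → m ≤ l.size) →
      ((∃ l : SeqPartition, l.size = m' ∧ SeqPartition.HasCore s l σ' ∧ SeqPartition.HasCore t l τ') ∧
        ∀ l : SeqPartition, SeqPartition.HasCore s l σ' → SeqPartition.HasCore t l τ' → m' ≤ l.size) →
      (m' : ℤ) = (m : ℤ) - σ.size - τ.size + σ'.size + τ'.size) := by
  have hs₀ : 0 < s := by omega
  have ht₀ : 0 < t := by omega
  have hst' := not_natCast_dvd_of_coprime hst hs
  have hts' := not_natCast_dvd_of_coprime hst.symm ht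
  obtain ⟨u', hu'W, huu'⟩ := WMon.exists_leftInverse hst' hu
  obtain ⟨v', hv'W, hvv'⟩ := WMon.exists_leftInverse hts' hv
  have hU := WMon.isLevelMap hst' hu
  have hV := WMon.isLevelMap hts' hv
  have hU' := WMon.isLevelMap hst' hu'W
  have hV' := WMon.isLevelMap hts' hv'W
  refine ⟨fun l m hm => minimalPart_of_betaSet_eq_image hs₀ ht₀ hU hV hU' hV' huu' hvv'
    (hm.trans (Set.image_image _ _ _).symm), ?_⟩
  rintro σ τ σ' τ' - - hσ' hτ' m m' ⟨⟨l, rfl, hlσ, hlτ⟩, hm⟩ ⟨⟨l', rfl, hl'σ, hl'τ⟩, hm'⟩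
  have := le_size_of_hasCore hs₀ ht₀ hU hV hσ' hτ' hm' hlσ hlτ
  have := le_size_of_hasCore hs₀ ht₀ hU' hV' (by rw [hσ', huu'.image_image])
    (by rw [hτ', hvv'.image_image]) hm hl'σ hl'τ
  omega
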